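/- arXiv:1001.1177 — 3 statements merged into one kernel-verified Lean document; each statement's English description precedes it below -/
import Mathlib

section
/- Let L : ℝ^k × ℝⁿ × ℝ^{nk} → ℝ be smooth. For 1 ≤ A ≤ k define at each point x the Lagrangian two-form ω_L^A(x)(u, w) = u_{q^i}·(D(∂L/∂v^i_A)(x) w) − w_{q^i}·(D(∂L/∂v^i_A)(x) u) (sum over i, D the Fréchet derivative) and the energy E_L = v^i_A ∂L/∂v^i_A − L (sum over A, i). Suppose that at a point x the nk×nk Hessian matrix (∂²L/∂v^i_A ∂v^j_B (x)) is invertible, and that vectors X_1, …, X_k ∈ ℝ^k × ℝⁿ × ℝ^{nk} satisfy (X_A)_{t^B} = δ^B_A for all A, B and ∑_{A=1}^k ω_L^A(x)(X_A, w) = DE_L(x) w + ∑_{A=1}^k (∂L/∂t^A)(x) w_{t^A} for every vector w. Then (X_A)_{q^i} = v^i_A(x) for all A, i; that is, any solution of the geometric Euler–Lagrange equation of a regular Lagrangian satisfies the second-order partial differential equation (SOPDE) condition. -/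
/-!
STATEMENT 1: Any solution of the geometric Euler–Lagrange equation of a regular
Lagrangian on `ℝ^k × ℝⁿ × ℝ^{nk}` satisfies the SOPDE condition.
-/

open scoped BigOperators

/-- The phase space `ℝ^k × ℝⁿ × ℝ^{nk}`, points `(t^A, q^i, v^i_A)`. -/
abbrev Vkn (k n : ℕ) := (Fin k → ℝ) × (Fin n → ℝ) × (Fin n → Fin k → ℝ)

noncomputable section

/-- Basis vector in the `t^A` direction. -/
def et (k n : ℕ) (A : Fin k) : Vkn k n := (Pi.single A 1, 0, 0)

/-- Basis vector in the `q^i` direction. -/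
def eq' (k n : ℕ) (i : Fin n) : Vkn k n := (0, Pi.single i 1, 0)

/-- Basis vector in the `v^i_A` direction. -/
def ev' (k n : ℕ) (i : Fin n) (A : Fin k) : Vkn k n := (0, 0, Pi.single i (Pi.single A 1))

/-- Directional (partial) derivative of `f` at `x` in direction `v`. -/
def pd (k n : ℕ) (f : Vkn k n → ℝ) (v : Vkn k n) (x : Vkn k n) : ℝ := fderiv ℝ f x v

/-- Second partial derivative: derivative in direction `v` of `y ↦ ∂f/∂w (y)`. -/
def pd2 (k n : ℕ) (f : Vkn k n → ℝ) (v w : Vkn k n) (x : Vkn k n) : ℝ :=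
  fderiv ℝ (fun y => fderiv ℝ f y w) x v

end

/-- Projection `(t, q, v) ↦ v i A` as a continuous linear map. -/
noncomputable def projv (k n : ℕ) (i : Fin n) (A : Fin k) : Vkn k n →L[ℝ] ℝ :=
  ((ContinuousLinearMap.proj A).comp ((ContinuousLinearMap.proj i).comp
    ((ContinuousLinearMap.snd ℝ (Fin n → ℝ) (Fin n → Fin k → ℝ)).comp
      (ContinuousLinearMap.snd ℝ (Fin k → ℝ) ((Fin n → ℝ) × (Fin n → Fin k → ℝ))))))

/-- If `L` is regular at `x` and the vectors `X_1, …, X_k` satisfy the geometric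
Euler–Lagrange equation at `x` (together with `(X_A)_{t^B} = δ^B_A`), then they satisfy the
SOPDE condition `(X_A)_{q^i} = v^i_A(x)`. -/
theorem stmt_1 (k n : ℕ) (hk : 0 < k) (hn : 0 < n)
    (L : Vkn k n → ℝ) (hL : ContDiff ℝ (⊤ : ℕ∞) L)
    (x : Vkn k n)
    -- regularity: the Hessian `(∂²L/∂v^i_A ∂v^j_B (x))` is invertible
    (hreg : IsUnit (Matrix.of fun p q : Fin n × Fin k =>
      pd2 k n L (ev' k n p.1 p.2) (ev' k n q.1 q.2) x))
    (X : Fin k → Vkn k n)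
    -- `(X_A)_{t^B} = δ^B_A`
    (hXt : ∀ A B : Fin k, (X A).1 B = if B = A then (1 : ℝ) else 0)
    -- `∑_A ω_L^A(x)(X_A, w) = DE_L(x) w + ∑_A (∂L/∂t^A)(x) w_{t^A}` for all `w`
    (hgeom : ∀ w : Vkn k n,
      ∑ A, ∑ i, ((X A).2.1 i * pd2 k n L w (ev' k n i A) x
          - w.2.1 i * pd2 k n L (X A) (ev' k n i A) x)
        = fderiv ℝ (fun y => (∑ A, ∑ i, y.2.2 i A * fderiv ℝ L y (ev' k n i A)) - L y) x w
          + ∑ A, fderiv ℝ L x (et k n A) * w.1 A) :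
    ∀ (A : Fin k) (i : Fin n), (X A).2.1 i = x.2.2 i A := by
  classical
  have hLd : Differentiable ℝ L := hL.differentiable (by simp)
  have hgc : ∀ (i : Fin n) (A : Fin k),
      Differentiable ℝ (fun y => fderiv ℝ L y (ev' k n i A)) := by
    intro i A
    have h1 : ContDiff ℝ (⊤ : ℕ∞) (fderiv ℝ L) := hL.fderiv_right (by exact_mod_cast le_top)
    exact (((ContinuousLinearMap.apply ℝ ℝ (ev' k n i A)).contDiff.comp h1)).differentiable (by simp)
  -- derivative of the energy function
  have hE : HasFDerivAt (fun y => (∑ A, ∑ i, y.2.2 i A * fderiv ℝ L y (ev' k n i A)) - L y)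
      ((∑ A : Fin k, ∑ i : Fin n,
          (x.2.2 i A • fderiv ℝ (fun y => fderiv ℝ L y (ev' k n i A)) x
            + fderiv ℝ L x (ev' k n i A) • projv k n i A)) - fderiv ℝ L x) x := by
    refine HasFDerivAt.sub ?_ (hLd x).hasFDerivAt
    refine HasFDerivAt.fun_sum fun A _ => ?_
    refine HasFDerivAt.fun_sum fun i _ => ?_
    exact ((projv k n i A).hasFDerivAt).mul ((hgc i A) x).hasFDerivAt
  -- the key linear relations
  have key : ∀ (j : Fin n) (B : Fin k),
      ∑ A : Fin k, ∑ i : Fin n,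
        ((X A).2.1 i - x.2.2 i A) * pd2 k n L (ev' k n j B) (ev' k n i A) x = 0 := by
    intro j B
    have h := hgeom (ev' k n j B)
    rw [hE.fderiv] at h
    have hproj : ∀ (i : Fin n) (A : Fin k),
        (projv k n i A) (ev' k n j B) = (Pi.single j (Pi.single B 1) : Fin n → Fin k → ℝ) i A := fun _ _ => rfl
    simp only [ContinuousLinearMap.sub_apply, ContinuousLinearMap.sum_apply,
      ContinuousLinearMap.add_apply, ContinuousLinearMap.smul_apply, smul_eq_mul, hproj] at h
    have hsingle : ∑ A : Fin k, ∑ i : Fin n,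
        fderiv ℝ L x (ev' k n i A) * (Pi.single j (Pi.single B (1:ℝ)) : Fin n → Fin k → ℝ) i A
        = fderiv ℝ L x (ev' k n j B) := by
      have : ∀ (i : Fin n) (A : Fin k), (Pi.single j (Pi.single B (1:ℝ)) : Fin n → Fin k → ℝ) i A
          = (if i = j then (1:ℝ) else 0) * (if A = B then (1:ℝ) else 0) := by
        intro i A
        by_cases hij : i = j <;> by_cases hAB : A = B <;>
          simp [hij, hAB, Pi.single_apply]
      simp only [this, ← mul_assoc]
      rw [Finset.sum_comm]
      simp [Finset.sum_ite_eq', mul_ite, mul_one, mul_zero]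
    have hev : (ev' k n j B).2.1 = 0 := rfl
    have het : (ev' k n j B).1 = 0 := rfl
    simp only [hev, het, Pi.zero_apply, zero_mul, mul_zero, sub_zero, add_zero,
      Finset.sum_const_zero] at h
    have h2 : ∑ A : Fin k, ∑ i : Fin n,
        (X A).2.1 i * pd2 k n L (ev' k n j B) (ev' k n i A) x
        = ∑ A : Fin k, ∑ i : Fin n,
          x.2.2 i A * pd2 k n L (ev' k n j B) (ev' k n i A) x := by
      have h3 := h
      simp only [Finset.sum_add_distrib] at h3
      rw [hsingle, add_sub_cancel_right] at h3
      unfold pd2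
      exact h3
    simp only [sub_mul, Finset.sum_sub_distrib]
    rw [h2, sub_self]
  -- invert the Hessian
  set M : Matrix (Fin n × Fin k) (Fin n × Fin k) ℝ := Matrix.of fun p q : Fin n × Fin k =>
    pd2 k n L (ev' k n p.1 p.2) (ev' k n q.1 q.2) x with hM
  set c : Fin n × Fin k → ℝ := fun q => (X q.2).2.1 q.1 - x.2.2 q.1 q.2 with hcdef
  have hMc : M.mulVec c = 0 := by
    funext p
    obtain ⟨j, B⟩ := p
    have hk2 := key j B
    simp only [Matrix.mulVec, dotProduct, Pi.zero_apply]
    rw [Fintype.sum_prod_type, Finset.sum_comm]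
    rw [← hk2]
    refine Finset.sum_congr rfl fun A _ => Finset.sum_congr rfl fun i _ => ?_
    simp [hM, hcdef, mul_comm]
  obtain ⟨u, hu⟩ := hreg
  have hc : c = 0 := by
    have h1 : (↑u⁻¹ : Matrix (Fin n × Fin k) (Fin n × Fin k) ℝ).mulVec (M.mulVec c) = c := by
      rw [Matrix.mulVec_mulVec, ← hu, Units.inv_mul, Matrix.one_mulVec]
    rw [hMc, Matrix.mulVec_zero] at h1
    exact h1.symm
  intro A i
  have := congrFun hc (i, A)
  simpa [hcdef, sub_eq_zero] using this
end

section
/- Let ρ^i_α, C^γ_{αβ} be local structure functions of a Lie algebroid on an open set U ⊆ ℝⁿ, and let L : ℝ^k × U × ℝ^{mk} → ℝ and (ξ_A)^β_B : ℝ^k × U × ℝ^{mk} → ℝ (1 ≤ A, B ≤ k, 1 ≤ β ≤ m) be smooth functions such that for every index α and every point of ℝ^k × U × ℝ^{mk}: ∂²L/∂t^A∂y^α_A + y^β_A ρ^i_β ∂²L/∂q^i∂y^α_A + (ξ_A)^β_B ∂²L/∂y^β_B∂y^α_A = ρ^i_α ∂L/∂q^i − y^β_A C^γ_{αβ} ∂L/∂y^γ_A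 (sums over A, B, i, β, γ). Let φ^i, φ^α_A : ℝ^k → ℝ be smooth with (φ^1(t),…,φ^n(t)) ∈ U for all t, set Φ̃(t) = (t, φ^i(t), φ^α_A(t)), and assume the integral-section conditions ∂φ^i/∂t^A = φ^α_A(t) ρ^i_α(φ(t)) and ∂φ^β_B/∂t^A = (ξ_A)^β_B(Φ̃(t)) hold for all t and all indices. Then Φ̃ satisfies the Euler–Lagrange field equations on the Lie algebroid: for all α and all t, ∑_{A=1}^k ∂/∂t^A [ (∂L/∂y^α_A) ∘ Φ̃ ](t) = ρ^i_α(φ(t)) (∂L/∂q^i)(Φ̃(t)) − φ^β_A(t) C^γ_{αβ}(φ(t)) (∂L/∂y^γ_A)(Φ̃(t)) (sums over A, i, β, γ). -/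
/-!
STATEMENT 2: Integral sections of a solution of the geometric Euler–Lagrange equation on a
Lie algebroid satisfy the Euler–Lagrange field equations on the Lie algebroid.
-/

open scoped BigOperators

/-- The space `ℝ^k × ℝⁿ × ℝ^{mk}`, points `(t^A, q^i, y^α_A)`. -/
abbrev Wknm (k n m : ℕ) := (Fin k → ℝ) × (Fin n → ℝ) × (Fin m → Fin k → ℝ)

noncomputable section

/-- Basis vector in the `t^A` direction. -/
def wt (k n m : ℕ) (A : Fin k) : Wknm k n m := (Pi.single A 1, 0, 0)

/-- Basis vector in the `q^i` direction. -/
def wq (k n m : ℕ) (i : Fin n) : Wknm k n m := (0, Pi.single i 1, 0)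

/-- Basis vector in the `y^α_A` direction. -/
def wy (k n m : ℕ) (α : Fin m) (A : Fin k) : Wknm k n m := (0, 0, Pi.single α (Pi.single A 1))

/-- Second partial derivative: derivative in direction `v` of `x ↦ ∂f/∂w (x)`. -/
def pd2W (k n m : ℕ) (f : Wknm k n m → ℝ) (v w : Wknm k n m) (p : Wknm k n m) : ℝ :=
  fderiv ℝ (fun x => fderiv ℝ f x w) p v

end

lemma vec_decomp {k n m : ℕ} (u : Fin k → ℝ) (v : Fin n → ℝ) (w : Fin m → Fin k → ℝ) :
    ((u, v, w) : Wknm k n m)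
      = (∑ A, u A • wt k n m A) + (∑ i, v i • wq k n m i)
        + ∑ β, ∑ B, w β B • wy k n m β B := by
  simp only [wt, wq, wy, Prod.smul_mk, smul_zero]
  refine Prod.ext ?_ (Prod.ext ?_ ?_)
  · simp only [Prod.fst_sum, Prod.fst_add, Prod.snd_add]
    funext a
    simp [Finset.sum_apply, Pi.single_apply]
  · simp only [Prod.fst_sum, Prod.snd_sum, Prod.fst_add, Prod.snd_add]
    funext a
    simp [Finset.sum_apply, Pi.single_apply]
  · simp only [Prod.fst_sum, Prod.snd_sum, Prod.fst_add, Prod.snd_add]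
    funext a b
    simp [Finset.sum_apply, Pi.single_apply, Finset.sum_ite_eq]
lemma clm_decomp {k n m : ℕ} (T : Wknm k n m →L[ℝ] ℝ) (u : Fin k → ℝ) (v : Fin n → ℝ)
    (w : Fin m → Fin k → ℝ) :
    T (u, v, w) = (∑ A, u A * T (wt k n m A)) + (∑ i, v i * T (wq k n m i))
      + ∑ β, ∑ B, w β B * T (wy k n m β B) := by
  rw [vec_decomp u v w]
  simp [map_add, map_sum, map_smul, smul_eq_mul]


/-- If `L` and the functions `(ξ_A)^β_B` satisfy the local geometric Euler–Lagrange equation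
of the Lagrangian k-cosymplectic formalism on a Lie algebroid with structure functions
`ρ^i_α`, `C^γ_{αβ}`, and `Φ̃(t) = (t, φ^i(t), φ^α_A(t))` is an integral section, then `Φ̃`
satisfies the Euler–Lagrange field equations on the Lie algebroid. -/
theorem stmt_2 (k n m : ℕ) (hk : 0 < k) (hn : 0 < n) (hm : 0 < m)
    (U : Set (Fin n → ℝ)) (hU : IsOpen U)
    (ρ : Fin m → Fin n → (Fin n → ℝ) → ℝ)
    (C : Fin m → Fin m → Fin m → (Fin n → ℝ) → ℝ)
    (hρ : ∀ α i, ContDiffOn ℝ (⊤ : ℕ∞) (ρ α i) U)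
    (hC : ∀ α β γ, ContDiffOn ℝ (⊤ : ℕ∞) (C α β γ) U)
    (hCanti : ∀ α β γ x, C α β γ x = - C β α γ x)
    (L : Wknm k n m → ℝ)
    (hL : ContDiffOn ℝ (⊤ : ℕ∞) L {p : Wknm k n m | p.2.1 ∈ U})
    (ξ : Fin k → Fin k → Fin m → Wknm k n m → ℝ)
    (hξ : ∀ A B β, ContDiffOn ℝ (⊤ : ℕ∞) (ξ A B β) {p : Wknm k n m | p.2.1 ∈ U})
    -- the local geometric Euler–Lagrange equations for `(ξ_A)^β_B`
    (heq : ∀ (α : Fin m), ∀ p : Wknm k n m, p.2.1 ∈ U →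
      (∑ A, pd2W k n m L (wt k n m A) (wy k n m α A) p)
        + (∑ A, ∑ β, ∑ i, p.2.2 β A * ρ β i p.2.1 * pd2W k n m L (wq k n m i) (wy k n m α A) p)
        + (∑ A, ∑ B, ∑ β, ξ A B β p * pd2W k n m L (wy k n m β B) (wy k n m α A) p)
      = (∑ i, ρ α i p.2.1 * fderiv ℝ L p (wq k n m i))
        - ∑ A, ∑ β, ∑ γ, p.2.2 β A * C α β γ p.2.1 * fderiv ℝ L p (wy k n m γ A))
    -- the candidate solution `Φ̃(t) = (t, φq(t), φy(t))`
    (φq : (Fin k → ℝ) → (Fin n → ℝ)) (hφq : ContDiff ℝ (⊤ : ℕ∞) φq)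
    (φy : (Fin k → ℝ) → Fin m → Fin k → ℝ)
    (hφy : ContDiff ℝ (⊤ : ℕ∞) φy)
    (hmem : ∀ t, φq t ∈ U)
    -- integral-section conditions
    (hint1 : ∀ (t : Fin k → ℝ) (A : Fin k) (i : Fin n),
      fderiv ℝ (fun s => φq s i) t (Pi.single A 1) = ∑ α, φy t α A * ρ α i (φq t))
    (hint2 : ∀ (t : Fin k → ℝ) (A B : Fin k) (β : Fin m),
      fderiv ℝ (fun s => φy s β B) t (Pi.single A 1) = ξ A B β (t, φq t, φy t)) :
    -- Euler–Lagrange field equations on the Lie algebroid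
    ∀ (α : Fin m) (t : Fin k → ℝ),
      ∑ A, fderiv ℝ (fun s => fderiv ℝ L (s, φq s, φy s) (wy k n m α A)) t (Pi.single A 1)
        = (∑ i, ρ α i (φq t) * fderiv ℝ L (t, φq t, φy t) (wq k n m i))
          - ∑ A, ∑ β, ∑ γ, φy t β A * C α β γ (φq t)
              * fderiv ℝ L (t, φq t, φy t) (wy k n m γ A) := by
  intro α t
  set S : Set (Wknm k n m) := {p : Wknm k n m | p.2.1 ∈ U} with hSdef
  have hSopen : IsOpen S := hU.preimage (continuous_snd.fst)
  set p : Wknm k n m := (t, φq t, φy t) with hpdef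
  have hp : p ∈ S := hmem t
  -- derivative of Φ̃
  have hφq' : HasFDerivAt φq (fderiv ℝ φq t) t :=
    ((hφq.differentiable (by simp)) t).hasFDerivAt
  have hφy' : HasFDerivAt φy (fderiv ℝ φy t) t :=
    ((hφy.differentiable (by simp)) t).hasFDerivAt
  set D : (Fin k → ℝ) →L[ℝ] Wknm k n m :=
    (ContinuousLinearMap.id ℝ (Fin k → ℝ)).prod ((fderiv ℝ φq t).prod (fderiv ℝ φy t)) with hDdef
  have hΦ : HasFDerivAt (fun s : Fin k → ℝ => ((s, φq s, φy s) : Wknm k n m)) D t :=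
    HasFDerivAt.prodMk (hasFDerivAt_id t) (hφq'.prodMk hφy')
  -- component derivatives of φq, φy
  have hq_comp : ∀ (A : Fin k) (i : Fin n),
      fderiv ℝ φq t (Pi.single A 1) i = ∑ β, φy t β A * ρ β i (φq t) := by
    intro A i
    have hraw := (ContinuousLinearMap.proj (R := ℝ) (φ := fun _ : Fin n => ℝ) i).hasFDerivAt.comp t hφq'
    have h : HasFDerivAt (fun s => φq s i)
        ((ContinuousLinearMap.proj i).comp (fderiv ℝ φq t)) t := hraw
    have := h.fderiv
    rw [← hint1 t A i, this]
    rfl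
  have hy_comp : ∀ (A B : Fin k) (β : Fin m),
      fderiv ℝ φy t (Pi.single A 1) β B = ξ A B β p := by
    intro A B β
    have hraw1 := (ContinuousLinearMap.proj (R := ℝ) (φ := fun _ : Fin m => Fin k → ℝ) β).hasFDerivAt.comp t hφy'
    have h1 : HasFDerivAt (fun s => φy s β)
        ((ContinuousLinearMap.proj β).comp (fderiv ℝ φy t)) t := hraw1
    have h2 : HasFDerivAt (fun s => φy s β B)
        ((ContinuousLinearMap.proj B).comp
          ((ContinuousLinearMap.proj β).comp (fderiv ℝ φy t))) t := by
      exact (ContinuousLinearMap.proj (R := ℝ) (φ := fun _ : Fin k => ℝ) B).hasFDerivAt.comp t h1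
    have := h2.fderiv
    rw [← hint2 t A B β, this]
    rfl
  -- smoothness of F_A
  have hFA : ∀ A : Fin k, ContDiffOn ℝ (⊤ : ℕ∞)
      (fun x => fderiv ℝ L x (wy k n m α A)) S := by
    intro A
    exact (hL.fderiv_of_isOpen hSopen (by exact_mod_cast le_refl _)).clm_apply contDiffOn_const
  have hFAd : ∀ A : Fin k, DifferentiableAt ℝ (fun x => fderiv ℝ L x (wy k n m α A)) p := by
    intro A
    exact ((hFA A).differentiableOn (by simp)).differentiableAt (hSopen.mem_nhds hp)
  -- chain rule for each A
  have key : ∀ A : Fin k,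
      fderiv ℝ (fun s => fderiv ℝ L (s, φq s, φy s) (wy k n m α A)) t (Pi.single A 1)
        = pd2W k n m L (wt k n m A) (wy k n m α A) p
          + (∑ i, (∑ β, φy t β A * ρ β i (φq t)) * pd2W k n m L (wq k n m i) (wy k n m α A) p)
          + ∑ β, ∑ B, ξ A B β p * pd2W k n m L (wy k n m β B) (wy k n m α A) p := by
    intro A
    have hc : HasFDerivAt (fun s => fderiv ℝ L (s, φq s, φy s) (wy k n m α A))
        ((fderiv ℝ (fun x => fderiv ℝ L x (wy k n m α A)) p).comp D) t :=
      by have := ((hFAd A).hasFDerivAt).comp t hΦ; exact this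
    rw [hc.fderiv]
    set T := fderiv ℝ (fun x => fderiv ℝ L x (wy k n m α A)) p with hTdef
    have hD : D (Pi.single A 1)
        = ((Pi.single A 1 : Fin k → ℝ), fderiv ℝ φq t (Pi.single A 1),
            fderiv ℝ φy t (Pi.single A 1)) := rfl
    rw [ContinuousLinearMap.comp_apply, hD, clm_decomp]
    have h1 : (∑ B, (Pi.single A 1 : Fin k → ℝ) B * T (wt k n m B)) = T (wt k n m A) := by
      simp [Pi.single_apply]
    have h2 : (∑ i, fderiv ℝ φq t (Pi.single A 1) i * T (wq k n m i))
        = ∑ i, (∑ β, φy t β A * ρ β i (φq t)) * T (wq k n m i) := by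
      refine Finset.sum_congr rfl fun i _ => ?_
      rw [hq_comp A i]
    have h3 : (∑ β, ∑ B, fderiv ℝ φy t (Pi.single A 1) β B * T (wy k n m β B))
        = ∑ β, ∑ B, ξ A B β p * T (wy k n m β B) := by
      refine Finset.sum_congr rfl fun β _ => Finset.sum_congr rfl fun B _ => ?_
      rw [hy_comp A B β]
    rw [h1, h2, h3]
    rfl
  calc ∑ A, fderiv ℝ (fun s => fderiv ℝ L (s, φq s, φy s) (wy k n m α A)) t (Pi.single A 1)
      = (∑ A, pd2W k n m L (wt k n m A) (wy k n m α A) p)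
        + (∑ A, ∑ β, ∑ i, p.2.2 β A * ρ β i p.2.1 * pd2W k n m L (wq k n m i) (wy k n m α A) p)
        + (∑ A, ∑ B, ∑ β, ξ A B β p * pd2W k n m L (wy k n m β B) (wy k n m α A) p) := by
        rw [Finset.sum_congr rfl fun A _ => key A]
        rw [Finset.sum_add_distrib, Finset.sum_add_distrib]
        congr 1
        · congr 1
          refine Finset.sum_congr rfl fun A _ => ?_
          rw [Finset.sum_comm]
          simp_rw [Finset.sum_mul]
          rfl
        · refine Finset.sum_congr rfl fun A _ => ?_
          exact Finset.sum_comm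
    _ = _ := by
        rw [heq α p hp]
end

section
/- Let ρ^i_α, C^γ_{αβ} be local structure functions of a Lie algebroid on an open set U ⊆ ℝⁿ. Let L : ℝ^k × U × ℝ^{mk} → ℝ be smooth and hyperregular: the Legendre transformation Leg(t, q, y) = (t, q, (∂L/∂y^α_A)(t,q,y)) is a bijection of ℝ^k × U × ℝ^{mk} onto itself and the mk×mk Hessian matrix (∂²L/∂y^α_A ∂y^β_B) is invertible at every point. Set E_L = y^α_A ∂L/∂y^α_A − L and H = E_L ∘ Leg⁻¹. Let φ^i, φ^α_A : ℝ^k → ℝ be smooth with (φ^1(t),…,φ^n(t)) ∈ U, set Φ̃(t) = (t, φ^i(t), φ^α_A(t)), assume ∂φ^i/∂t^A = φ^α_A(t) ρ^i_α(φ(t)) for all t, A, i, and let ψ = Leg ∘ Φ̃, written ψ(t) = (t, φ^i(t), ψ^A_α(t)). Then Φ̃ satisfies the Euler–Lagrange field equations on the Lie algebroid, i.e. ∑_{A=1}^k ∂/∂t^A [ (∂L/∂y^α_A) ∘ Φ̃ ](t) = ρ^i_α(φ(t)) (∂L/∂q^i)(Φ̃(t)) − φ^β_A(t) C^γ_{αβ}(φ(t))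 (∂L/∂y^γ_A)(Φ̃(t)) for all α and t, if and only if ψ satisfies the Hamilton field equations on the Lie algebroid, i.e. ∂φ^i/∂t^A = ρ^i_α (∂H/∂y^A_α)(ψ(t)) and ∑_{A=1}^k ∂ψ^A_α/∂t^A = −( ρ^i_α (∂H/∂q^i)(ψ(t)) + C^γ_{αβ}(φ(t)) ψ^A_γ(t) (∂H/∂y^A_β)(ψ(t)) ) for all α and t. -/
/-!
STATEMENT 11: Equivalence of the Euler–Lagrange and Hamilton field equations on a Lie
algebroid for a hyperregular Lagrangian, via the Legendre transformation.
-/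

open scoped BigOperators

noncomputable section

/-- The Legendre transformation `Leg(t, q, y) = (t, q, ∂L/∂y^α_A (t,q,y))`. -/
def LegW (k n m : ℕ) (L : Wknm k n m → ℝ) (p : Wknm k n m) : Wknm k n m :=
  (p.1, p.2.1, fun α A => fderiv ℝ L p (wy k n m α A))

/-- The energy `E_L = y^α_A ∂L/∂y^α_A − L`. -/
def energyW (k n m : ℕ) (L : Wknm k n m → ℝ) (y : Wknm k n m) : ℝ :=
  (∑ A, ∑ α, y.2.2 α A * fderiv ℝ L y (wy k n m α A)) - L y

end

-- auxiliary lemmas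
lemma wy_decomp (k n m : ℕ) (u : Fin m → Fin k → ℝ) :
    ((0, 0, u) : Wknm k n m) = ∑ α, ∑ A, u α A • wy k n m α A := by
  refine Prod.ext ?_ (Prod.ext ?_ ?_)
  · simp [wy, Prod.fst_sum]
  · simp [wy, Prod.snd_sum, Prod.fst_sum]
  · simp only [Prod.snd_sum]
    funext β B
    simp [wy, Pi.single_apply, Finset.sum_apply, ite_apply, Finset.sum_ite_eq]

lemma split_v (k n m : ℕ) (v : Wknm k n m) :
    v = ((v.1, v.2.1, 0) : Wknm k n m) + ((0, 0, v.2.2) : Wknm k n m) := by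
  refine Prod.ext ?_ (Prod.ext ?_ ?_) <;> simp

example : ((⊤ : ℕ∞) : WithTop ℕ∞) + 1 ≤ ((⊤ : ℕ∞) : WithTop ℕ∞) := by
  exact_mod_cast le_rfl

example : (1 : WithTop ℕ∞) ≤ ((⊤ : ℕ∞) : WithTop ℕ∞) := by exact_mod_cast le_top

open Function Set ContinuousLinearMap in
lemma fderivH (k n m : ℕ) (U : Set (Fin n → ℝ))
    (hU : IsOpen U)
    (L : Wknm k n m → ℝ)
    (hL : ContDiffOn ℝ (⊤ : ℕ∞) L {p : Wknm k n m | p.2.1 ∈ U})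
    (hbij : Set.BijOn (LegW k n m L) {p : Wknm k n m | p.2.1 ∈ U}
      {p : Wknm k n m | p.2.1 ∈ U})
    (hreg : ∀ x : Wknm k n m, x.2.1 ∈ U →
      IsUnit (Matrix.of fun p q : Fin m × Fin k =>
        pd2W k n m L (wy k n m p.1 p.2) (wy k n m q.1 q.2) x))
    (H : Wknm k n m → ℝ)
    (hHdef : ∀ p : Wknm k n m, H p
      = energyW k n m L
          (Function.invFunOn (LegW k n m L) {p : Wknm k n m | p.2.1 ∈ U} p))
    (x : Wknm k n m) (hx : x.2.1 ∈ U) (w : Wknm k n m) :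
    fderiv ℝ H (LegW k n m L x) w
      = (∑ A, ∑ α, x.2.2 α A * w.2.2 α A) - fderiv ℝ L x (w.1, w.2.1, 0) := by
  classical
  set S : Set (Wknm k n m) := {p : Wknm k n m | p.2.1 ∈ U} with hSdef
  have hS : IsOpen S := hU.preimage (continuous_fst.comp continuous_snd)
  have hmemS : x ∈ S := hx
  set P : Wknm k n m → Fin m → Fin k → ℝ :=
    fun p α A => fderiv ℝ L p (wy k n m α A) with hPdef
  have hfd : ContDiffOn ℝ (⊤ : ℕ∞) (fun p => fderiv ℝ L p) S :=
    hL.fderiv_of_isOpen hS (by exact_mod_cast le_rfl)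
  have hPd : ∀ α A, ContDiffOn ℝ (⊤ : ℕ∞) (fun p => P p α A) S :=
    fun α A => hfd.clm_apply contDiffOn_const
  have hPdiff : ∀ α A, ∀ z ∈ S, DifferentiableAt ℝ (fun p => P p α A) z :=
    fun α A z hz => ((hPd α A).contDiffAt (hS.mem_nhds hz)).differentiableAt
      (by simp)
  set M : Matrix (Fin m × Fin k) (Fin m × Fin k) ℝ :=
    Matrix.of fun p q : Fin m × Fin k =>
      pd2W k n m L (wy k n m p.1 p.2) (wy k n m q.1 q.2) x with hMdef
  have hM : ∀ p q : Fin m × Fin k,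
      M p q = fderiv ℝ (fun z => P z q.1 q.2) x (wy k n m p.1 p.2) := fun p q => rfl
  -- decomposition of directional derivatives of P
  have hFv : ∀ (v : Wknm k n m) (α : Fin m) (A : Fin k),
      fderiv ℝ (fun p => P p α A) x v
        = fderiv ℝ (fun p => P p α A) x (v.1, v.2.1, 0)
          + ∑ β, ∑ B, v.2.2 β B * M (β, B) (α, A) := by
    intro v α A
    conv_lhs => rw [split_v k n m v]
    rw [map_add, wy_decomp k n m v.2.2, map_sum]
    congr 1
    refine Finset.sum_congr rfl fun β _ => ?_
    rw [map_sum]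
    exact Finset.sum_congr rfl fun B _ => by rw [map_smul, smul_eq_mul, hM]
  -- the derivative of the Legendre map
  set Fm : Wknm k n m →L[ℝ] (Fin m → Fin k → ℝ) :=
    ContinuousLinearMap.pi fun α => ContinuousLinearMap.pi
      fun A => fderiv ℝ (fun p => P p α A) x with hFmdef
  set T : Wknm k n m →L[ℝ] Wknm k n m :=
    (ContinuousLinearMap.fst ℝ _ _).prod
      (((ContinuousLinearMap.fst ℝ _ _).comp (ContinuousLinearMap.snd ℝ _ _)).prod Fm)
    with hTdef
  have hTapp : ∀ v : Wknm k n m,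
      T v = (v.1, v.2.1, fun α A => fderiv ℝ (fun p => P p α A) x v) := fun v => rfl
  have hLegT : HasFDerivAt (LegW k n m L) T x := by
    refine HasFDerivAt.prodMk hasFDerivAt_fst
      (HasFDerivAt.prodMk (hasFDerivAt_fst.comp x hasFDerivAt_snd) ?_)
    refine hasFDerivAt_pi'' fun α => hasFDerivAt_pi'' fun A => ?_
    have h1 : (ContinuousLinearMap.proj A).comp ((ContinuousLinearMap.proj α).comp Fm)
        = fderiv ℝ (fun p => P p α A) x := by
      refine ContinuousLinearMap.ext fun v => ?_
      simp [hFmdef]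
    rw [h1]
    exact (hPdiff α A x hmemS).hasFDerivAt
  -- invertibility of T
  have hMu : IsUnit M := hreg x hx
  set N : Matrix (Fin m × Fin k) (Fin m × Fin k) ℝ := ↑hMu.unit⁻¹ with hNdef
  have hNM : N * M = 1 := by
    rw [hNdef]
    nth_rewrite 2 [← hMu.unit_spec]
    exact_mod_cast hMu.unit.inv_mul
  have hMN : M * N = 1 := by
    rw [hNdef]
    nth_rewrite 1 [← hMu.unit_spec]
    exact_mod_cast hMu.unit.mul_inv
  have hsum_vecMul : ∀ (v' : Fin m × Fin k → ℝ) (α : Fin m) (A : Fin k),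
      (∑ β, ∑ B, v' (β, B) * M (β, B) (α, A)) = Matrix.vecMul v' M (α, A) := by
    intro v' α A
    rw [Matrix.vecMul, dotProduct]
    rw [Fintype.sum_prod_type]
  have hker : ∀ v : Wknm k n m, T v = 0 → v = 0 := by
    intro v hv
    rw [hTapp v] at hv
    have h1 : v.1 = 0 := congrArg Prod.fst hv
    have h2 : v.2.1 = 0 := congrArg (fun z => z.2.1) hv
    have h3 : ∀ α A, fderiv ℝ (fun p => P p α A) x v = 0 :=
      fun α A => congrArg (fun z : Wknm k n m => z.2.2 α A) hv
    have h0 : ((v.1, v.2.1, 0) : Wknm k n m) = 0 := by rw [h1, h2]; rfl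
    have hvM : Matrix.vecMul (fun p : Fin m × Fin k => v.2.2 p.1 p.2) M = 0 := by
      funext q
      rw [← hsum_vecMul]
      have := hFv v q.1 q.2
      rw [h3 q.1 q.2, h0, map_zero] at this
      simpa using this.symm
    have hv' : (fun p : Fin m × Fin k => v.2.2 p.1 p.2) = 0 := by
      have : Matrix.vecMul (Matrix.vecMul (fun p : Fin m × Fin k => v.2.2 p.1 p.2) M) N
          = Matrix.vecMul (fun p : Fin m × Fin k => v.2.2 p.1 p.2) (M * N) :=
        (Matrix.vecMul_vecMul _ M N)
      rw [hvM, hMN, Matrix.vecMul_one, Matrix.zero_vecMul] at this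
      exact this.symm
    have h4 : v.2.2 = 0 := by
      funext β B
      exact congrFun hv' (β, B)
    refine Prod.ext h1 (Prod.ext h2 h4)
  have hinj : Function.Injective T := by
    intro a b hab
    have : T (a - b) = 0 := by rw [map_sub, hab, sub_self]
    have := hker _ this
    exact sub_eq_zero.mp this
  have hsurj : Function.Surjective T := by
    intro w'
    set r : Fin m × Fin k → ℝ := fun q =>
      w'.2.2 q.1 q.2 - fderiv ℝ (fun p => P p q.1 q.2) x (w'.1, w'.2.1, 0) with hrdef
    refine ⟨(w'.1, w'.2.1, fun α A => Matrix.vecMul r N (α, A)), ?_⟩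
    rw [hTapp]
    refine Prod.ext rfl (Prod.ext rfl ?_)
    funext α A
    show fderiv ℝ (fun p => P p α A) x
        (w'.1, w'.2.1, fun α' A' => Matrix.vecMul r N (α', A')) = w'.2.2 α A
    rw [hFv]
    rw [hsum_vecMul, Matrix.vecMul_vecMul, hNM, Matrix.vecMul_one, hrdef]
    simp only
    ring
  -- upgrade T to a continuous linear equivalence
  set e : Wknm k n m ≃L[ℝ] Wknm k n m :=
    (LinearEquiv.ofBijective T.toLinearMap ⟨hinj, hsurj⟩).toContinuousLinearEquiv with hedef
  have he : (e : Wknm k n m →L[ℝ] Wknm k n m) = T := by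
    refine ContinuousLinearMap.ext fun v => ?_
    rfl
  -- smoothness of the Legendre transformation
  have hLegC : ContDiffOn ℝ (⊤ : ℕ∞) (LegW k n m L) S := by
    refine ContDiffOn.prodMk (contDiff_fst.contDiffOn) (ContDiffOn.prodMk ?_ ?_)
    · exact (contDiff_fst.comp contDiff_snd).contDiffOn
    · exact contDiffOn_pi.2 fun α => contDiffOn_pi.2 fun A => hPd α A
  have hstrict : HasStrictFDerivAt (LegW k n m L)
      (e : Wknm k n m →L[ℝ] Wknm k n m) x := by
    rw [he]
    exact (hLegC.contDiffAt (hS.mem_nhds hmemS)).hasStrictFDerivAt' hLegT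
      (by simp)
  set g : Wknm k n m → Wknm k n m := hstrict.localInverse (LegW k n m L) e x with hgdef
  have hgx : g (LegW k n m L x) = x := hstrict.localInverse_apply_image
  have hgd : HasStrictFDerivAt g
      (e.symm : Wknm k n m →L[ℝ] Wknm k n m) (LegW k n m L x) := hstrict.to_localInverse
  set y : Wknm k n m := LegW k n m L x with hydef
  have hy : y ∈ S := hbij.mapsTo hmemS
  -- H agrees with energy ∘ g near y
  have hHg : H =ᶠ[nhds y] (energyW k n m L) ∘ g := by
    have h1 : ∀ᶠ p in nhds y, p ∈ S :=
      Filter.eventually_of_mem (hS.mem_nhds hy) fun p hp => hp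
    have h2 : ∀ᶠ p in nhds y, LegW k n m L (g p) = p := hstrict.eventually_right_inverse
    have hgyS : g y ∈ S := by rw [hgx]; exact hmemS
    have h3 : ∀ᶠ p in nhds y, g p ∈ S :=
      hstrict.localInverse_continuousAt.eventually_mem (hS.mem_nhds hgyS)
    filter_upwards [h1, h2, h3] with p hp1 hp2 hp3
    rw [hHdef p]
    have hex : ∃ a ∈ S, LegW k n m L a = p := by
      have : p ∈ LegW k n m L '' S := by rw [hbij.image_eq]; exact hp1
      obtain ⟨a, ha, hap⟩ := this
      exact ⟨a, ha, hap⟩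
    have : invFunOn (LegW k n m L) S p = g p :=
      hbij.injOn (Function.invFunOn_mem hex) hp3
        (by rw [Function.invFunOn_eq hex, hp2])
    rw [this]
    rfl
  -- differentiability and derivative of the energy
  have hL' : DifferentiableAt ℝ L x :=
    (hL.contDiffAt (hS.mem_nhds hmemS)).differentiableAt (by simp)
  set c : Fin m → Fin k → (Wknm k n m →L[ℝ] ℝ) := fun α A =>
    (ContinuousLinearMap.proj A : (Fin k → ℝ) →L[ℝ] ℝ).comp
      ((ContinuousLinearMap.proj α : (Fin m → Fin k → ℝ) →L[ℝ] (Fin k → ℝ)).comp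
        ((ContinuousLinearMap.snd ℝ (Fin n → ℝ) (Fin m → Fin k → ℝ)).comp
          (ContinuousLinearMap.snd ℝ (Fin k → ℝ) ((Fin n → ℝ) × (Fin m → Fin k → ℝ))))) with hcdef
  have hcoord : ∀ (α : Fin m) (A : Fin k),
      HasFDerivAt (fun p : Wknm k n m => p.2.2 α A) (c α A) x :=
    fun α A => (c α A).hasFDerivAt
  have hterm : ∀ (A : Fin k) (α : Fin m),
      DifferentiableAt ℝ (fun p : Wknm k n m => p.2.2 α A * P p α A) x :=
    fun A α => ((hcoord α A).differentiableAt).mul (hPdiff α A x hmemS)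
  have hsumd : DifferentiableAt ℝ
      (fun p : Wknm k n m => ∑ A, ∑ α, p.2.2 α A * P p α A) x := by
    apply DifferentiableAt.fun_sum
    intro A _
    exact DifferentiableAt.fun_sum fun α _ => hterm A α
  have hEeq : energyW k n m L
      = fun p : Wknm k n m => (∑ A, ∑ α, p.2.2 α A * P p α A) - L p := rfl
  have hEdiff : DifferentiableAt ℝ (energyW k n m L) x := by
    rw [hEeq]; exact hsumd.sub hL'
  have hEv : ∀ v : Wknm k n m, fderiv ℝ (energyW k n m L) x v
      = (∑ A, ∑ α, (x.2.2 α A * fderiv ℝ (fun p => P p α A) x v + P x α A * v.2.2 α A))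
        - fderiv ℝ L x v := by
    intro v
    rw [hEeq, fderiv_fun_sub hsumd hL']
    simp only [ContinuousLinearMap.sub_apply]
    congr 1
    rw [fderiv_fun_sum (fun A _ => DifferentiableAt.fun_sum fun α _ => hterm A α)]
    simp only [ContinuousLinearMap.sum_apply]
    refine Finset.sum_congr rfl fun A _ => ?_
    rw [fderiv_fun_sum (fun α _ => hterm A α)]
    simp only [ContinuousLinearMap.sum_apply]
    refine Finset.sum_congr rfl fun α _ => ?_
    rw [fderiv_fun_mul ((hcoord α A).differentiableAt) (hPdiff α A x hmemS)]
    simp only [ContinuousLinearMap.add_apply, ContinuousLinearMap.smul_apply, smul_eq_mul]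
    rw [(hcoord α A).fderiv]
    have hcv : (c α A) v = v.2.2 α A := rfl
    rw [hcv]
  -- derivative of H
  have hfH : fderiv ℝ H y
      = (fderiv ℝ (energyW k n m L) x).comp
          (e.symm : Wknm k n m →L[ℝ] Wknm k n m) := by
    rw [hHg.fderiv_eq]
    have hcomp : fderiv ℝ (energyW k n m L ∘ g) y
        = (fderiv ℝ (energyW k n m L) (g y)).comp (fderiv ℝ g y) := by
      apply fderiv_comp
      · rw [hgx]; exact hEdiff
      · exact hgd.differentiableAt
    rw [hcomp, hgx, hgd.hasFDerivAt.fderiv]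
  set v : Wknm k n m := e.symm w with hvdef
  have hTv : T v = w := by rw [← he]; exact e.apply_symm_apply w
  have hTv' : ((v.1, v.2.1, fun α A => fderiv ℝ (fun p => P p α A) x v) : Wknm k n m) = w := by
    rw [← hTapp]; exact hTv
  have hv1 : v.1 = w.1 := by rw [← hTv']
  have hv2 : v.2.1 = w.2.1 := by rw [← hTv']
  have hv3 : ∀ α A, fderiv ℝ (fun p => P p α A) x v = w.2.2 α A := by
    intro α A
    rw [← hTv']
  have hLv0 : fderiv ℝ L x ((0, 0, v.2.2) : Wknm k n m)
      = ∑ A, ∑ α, v.2.2 α A * P x α A := by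
    rw [wy_decomp k n m v.2.2]
    simp only [map_sum, map_smul, smul_eq_mul]
    rw [Finset.sum_comm]
  have hLv : fderiv ℝ L x v
      = fderiv ℝ L x (w.1, w.2.1, 0) + ∑ A, ∑ α, v.2.2 α A * P x α A := by
    conv_lhs => rw [split_v k n m v]
    rw [map_add, hLv0, hv1, hv2]
  have h1 : fderiv ℝ H y w = fderiv ℝ (energyW k n m L) x v := by
    rw [hfH]; rfl
  rw [h1, hEv v, hLv]
  have h3 : (∑ A, ∑ α, (x.2.2 α A * fderiv ℝ (fun p => P p α A) x v + P x α A * v.2.2 α A))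
      = (∑ A, ∑ α, x.2.2 α A * w.2.2 α A) + ∑ A, ∑ α, v.2.2 α A * P x α A := by
    rw [← Finset.sum_add_distrib]
    refine Finset.sum_congr rfl fun A _ => ?_
    rw [← Finset.sum_add_distrib]
    refine Finset.sum_congr rfl fun α _ => ?_
    rw [hv3]
    ring
  rw [h3]
  ring


/-- For a hyperregular Lagrangian on a Lie algebroid with structure functions `ρ^i_α`,
`C^γ_{αβ}` and Hamiltonian `H = E_L ∘ Leg⁻¹`, an admissible map
`Φ̃(t) = (t, φ^i(t), φ^α_A(t))` satisfies the Euler–Lagrange field equations iff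
`ψ = Leg ∘ Φ̃` satisfies the Hamilton field equations. -/
theorem stmt_11 (k n m : ℕ) (hk : 0 < k) (hn : 0 < n) (hm : 0 < m)
    (U : Set (Fin n → ℝ)) (hU : IsOpen U)
    (ρ : Fin m → Fin n → (Fin n → ℝ) → ℝ)
    (C : Fin m → Fin m → Fin m → (Fin n → ℝ) → ℝ)
    (hρ : ∀ α i, ContDiffOn ℝ (⊤ : ℕ∞) (ρ α i) U)
    (hC : ∀ α β γ, ContDiffOn ℝ (⊤ : ℕ∞) (C α β γ) U)
    (hCanti : ∀ α β γ x, C α β γ x = - C β α γ x)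
    (L : Wknm k n m → ℝ)
    (hL : ContDiffOn ℝ (⊤ : ℕ∞) L {p : Wknm k n m | p.2.1 ∈ U})
    -- hyperregularity
    (hbij : Set.BijOn (LegW k n m L) {p : Wknm k n m | p.2.1 ∈ U}
      {p : Wknm k n m | p.2.1 ∈ U})
    (hreg : ∀ x : Wknm k n m, x.2.1 ∈ U →
      IsUnit (Matrix.of fun p q : Fin m × Fin k =>
        pd2W k n m L (wy k n m p.1 p.2) (wy k n m q.1 q.2) x))
    -- `H = E_L ∘ Leg⁻¹`
    (H : Wknm k n m → ℝ)
    (hHdef : ∀ p : Wknm k n m, H p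
      = energyW k n m L
          (Function.invFunOn (LegW k n m L) {p : Wknm k n m | p.2.1 ∈ U} p))
    -- the candidate solution `Φ̃(t) = (t, φq(t), φy(t))`
    (φq : (Fin k → ℝ) → (Fin n → ℝ)) (hφq : ContDiff ℝ (⊤ : ℕ∞) φq)
    (φy : (Fin k → ℝ) → Fin m → Fin k → ℝ) (hφy : ContDiff ℝ (⊤ : ℕ∞) φy)
    (hmem : ∀ t, φq t ∈ U)
    -- admissibility: `∂φ^i/∂t^A = φ^α_A ρ^i_α`
    (hadm : ∀ (t : Fin k → ℝ) (A : Fin k) (i : Fin n),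
      fderiv ℝ (fun s => φq s i) t (Pi.single A 1) = ∑ α, φy t α A * ρ α i (φq t)) :
    -- Euler–Lagrange field equations on the Lie algebroid for `Φ̃`
    (∀ (α : Fin m) (t : Fin k → ℝ),
      ∑ A, fderiv ℝ (fun s => fderiv ℝ L (s, φq s, φy s) (wy k n m α A)) t (Pi.single A 1)
        = (∑ i, ρ α i (φq t) * fderiv ℝ L (t, φq t, φy t) (wq k n m i))
          - ∑ A, ∑ β, ∑ γ, φy t β A * C α β γ (φq t)
              * fderiv ℝ L (t, φq t, φy t) (wy k n m γ A))
    ↔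
    -- Hamilton field equations on the Lie algebroid for `ψ = Leg ∘ Φ̃`
    ((∀ (t : Fin k → ℝ) (A : Fin k) (i : Fin n),
        fderiv ℝ (fun s => φq s i) t (Pi.single A 1)
          = ∑ α, ρ α i (φq t)
              * fderiv ℝ H (LegW k n m L (t, φq t, φy t)) (wy k n m α A))
      ∧ (∀ (α : Fin m) (t : Fin k → ℝ),
        ∑ A, fderiv ℝ (fun s => (LegW k n m L (s, φq s, φy s)).2.2 α A) t (Pi.single A 1)
          = - ((∑ i, ρ α i (φq t)
                  * fderiv ℝ H (LegW k n m L (t, φq t, φy t)) (wq k n m i))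
              + ∑ A, ∑ β, ∑ γ, C α β γ (φq t) * (LegW k n m L (t, φq t, φy t)).2.2 γ A
                  * fderiv ℝ H (LegW k n m L (t, φq t, φy t)) (wy k n m β A)))) := by

  have key : ∀ (t : Fin k → ℝ) (w : Wknm k n m),
      fderiv ℝ H (LegW k n m L (t, φq t, φy t)) w
        = (∑ A, ∑ α, φy t α A * w.2.2 α A)
          - fderiv ℝ L (t, φq t, φy t) (w.1, w.2.1, 0) :=
    fun t w => fderivH k n m U hU L hL hbij hreg H hHdef (t, φq t, φy t) (hmem t) w
  have key1 : ∀ (t : Fin k → ℝ) (α : Fin m) (A : Fin k),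
      fderiv ℝ H (LegW k n m L (t, φq t, φy t)) (wy k n m α A) = φy t α A := by
    intro t α A
    rw [key]
    have h0 : (((wy k n m α A).1, (wy k n m α A).2.1, (0 : Fin m → Fin k → ℝ)) : Wknm k n m)
        = (0 : Wknm k n m) := rfl
    rw [h0, map_zero, sub_zero]
    simp [wy, Pi.single_apply, ite_apply, mul_ite, Finset.sum_ite_eq]
  have key2 : ∀ (t : Fin k → ℝ) (i : Fin n),
      fderiv ℝ H (LegW k n m L (t, φq t, φy t)) (wq k n m i)
        = - fderiv ℝ L (t, φq t, φy t) (wq k n m i) := by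
    intro t i
    rw [key]
    have h0 : (((wq k n m i).1, (wq k n m i).2.1, (0 : Fin m → Fin k → ℝ)) : Wknm k n m)
        = wq k n m i := rfl
    rw [h0]
    simp [wq]
  have hRHSeq : ∀ (α : Fin m) (t : Fin k → ℝ),
      (∑ i, ρ α i (φq t) * fderiv ℝ L (t, φq t, φy t) (wq k n m i))
        - (∑ A, ∑ β, ∑ γ, φy t β A * C α β γ (φq t)
            * fderiv ℝ L (t, φq t, φy t) (wy k n m γ A))
      = - ((∑ i, ρ α i (φq t) * fderiv ℝ H (LegW k n m L (t, φq t, φy t)) (wq k n m i))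
          + ∑ A, ∑ β, ∑ γ, C α β γ (φq t) * (LegW k n m L (t, φq t, φy t)).2.2 γ A
              * fderiv ℝ H (LegW k n m L (t, φq t, φy t)) (wy k n m β A)) := by
    intro α t
    have h1 : (∑ i, ρ α i (φq t) * fderiv ℝ H (LegW k n m L (t, φq t, φy t)) (wq k n m i))
        = - ∑ i, ρ α i (φq t) * fderiv ℝ L (t, φq t, φy t) (wq k n m i) := by
      rw [← Finset.sum_neg_distrib]
      refine Finset.sum_congr rfl fun i _ => ?_
      rw [key2 t i]
      ring
    have h2 : (∑ A, ∑ β, ∑ γ, C α β γ (φq t) * (LegW k n m L (t, φq t, φy t)).2.2 γ A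
            * fderiv ℝ H (LegW k n m L (t, φq t, φy t)) (wy k n m β A))
        = ∑ A, ∑ β, ∑ γ, φy t β A * C α β γ (φq t)
            * fderiv ℝ L (t, φq t, φy t) (wy k n m γ A) := by
      refine Finset.sum_congr rfl fun A _ => Finset.sum_congr rfl fun β _ =>
        Finset.sum_congr rfl fun γ _ => ?_
      rw [key1 t β A]
      show C α β γ (φq t) * fderiv ℝ L (t, φq t, φy t) (wy k n m γ A) * φy t β A = _
      ring
    rw [h1, h2]
    ring
  constructor
  · intro hEL
    refine ⟨fun t A i => ?_, fun α t => ?_⟩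
    · rw [hadm t A i]
      refine Finset.sum_congr rfl fun β _ => ?_
      rw [key1 t β A]
      ring
    · rw [← hRHSeq α t]
      exact hEL α t
  · rintro ⟨-, h2⟩ α t
    have := h2 α t
    rw [← hRHSeq α t] at this
    exact this
end
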